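/- Consider the matrix M with rows (1,1,1)/2, (1,-1,1)/2, (-1,1,1)/2, (-1,-1,1)/2, defining Ψ: ℝ³ → ℝ⁴ by Ψv = Mv and Φ: ℝ⁴ → ℝ³ by Φw = Mᵀw. Then: (a) Φ ∘ Ψ = Id on ℝ³; (b) Ψ maps the cone generated by (1,0,1), (0,1,1), (-1,0,1), (0,-1,1) into ℝ₊⁴; (c) Φ(ℝ₊⁴) is exactly the cone {(x,y,t) : |x| ≤ t, |y| ≤ t}, i.e., the cone over the full square [-1,1]². -/

import Mathlib

/-! The columns of `Mfact` are orthonormal, so `Mfactᵀ * Mfact = 1` and `Φ ∘ Ψ = id`.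
The four generators of the kite cone are sent by `Ψ` to 0/1-vectors, hence the cone lands in
`ℝ₊⁴`. Finally, the fibre of `Φ` over `(x, y, t)` is the line `(s, t + x - s, t + y - s, s - x - y)`,
which meets `ℝ₊⁴` exactly when `max 0 (x + y) ≤ min (t + x) (t + y)`, i.e. when `|x| ≤ t` and
`|y| ≤ t`. -/

noncomputable section

def Mfact : Matrix (Fin 4) (Fin 3) ℝ :=
  (1 / 2 : ℝ) • !![1, 1, 1; 1, -1, 1; -1, 1, 1; -1, -1, 1]

def PsiFact (v : Fin 3 → ℝ) : Fin 4 → ℝ := Mfact.mulVec v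

def PhiFact (w : Fin 4 → ℝ) : Fin 3 → ℝ := Mfact.transpose.mulVec w

/-- The cone generated by the four extreme points of the kite `Q_{(0,0,0,0)}`
lifted at height 1. -/
def kiteCone : Set (Fin 3 → ℝ) :=
  {v | ∃ a b c d : ℝ, 0 ≤ a ∧ 0 ≤ b ∧ 0 ≤ c ∧ 0 ≤ d ∧
    v = a • ![1, 0, 1] + b • ![0, 1, 1] + c • ![-1, 0, 1] + d • ![0, -1, 1]}

def squareCone : Set (Fin 3 → ℝ) := {v | |v 0| ≤ v 2 ∧ |v 1| ≤ v 2}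

theorem Mfact_transpose_mul_self : Mfact.transpose * Mfact = 1 := by
  ext i j
  fin_cases i <;> fin_cases j <;>
    simp [Mfact, Matrix.mul_apply, Fin.sum_univ_four] <;> norm_num

theorem phiFact_psiFact (v : Fin 3 → ℝ) : PhiFact (PsiFact v) = v := by
  rw [PhiFact, PsiFact, Matrix.mulVec_mulVec, Mfact_transpose_mul_self, Matrix.one_mulVec]

theorem psiFact_eq (v : Fin 3 → ℝ) :
    PsiFact v = ![(v 0 + v 1 + v 2) / 2, (v 0 - v 1 + v 2) / 2,
      (-v 0 + v 1 + v 2) / 2, (-v 0 - v 1 + v 2) / 2] := by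
  funext i
  fin_cases i <;>
    simp [PsiFact, Mfact, Matrix.mulVec, dotProduct, Fin.sum_univ_three] <;> ring

theorem phiFact_eq (w : Fin 4 → ℝ) :
    PhiFact w = ![(w 0 + w 1 - w 2 - w 3) / 2, (w 0 - w 1 + w 2 - w 3) / 2,
      (w 0 + w 1 + w 2 + w 3) / 2] := by
  funext j
  fin_cases j <;>
    simp [PhiFact, Mfact, Matrix.mulVec, dotProduct, Fin.sum_univ_four] <;> ring

theorem psiFact_kite_combination (a b c d : ℝ) :
    PsiFact (a • ![1, 0, 1] + b • ![0, 1, 1] + c • ![-1, 0, 1] + d • ![0, -1, 1]) =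
      ![a + b, a + d, b + c, c + d] := by
  rw [psiFact_eq]
  funext i
  fin_cases i <;> simp <;> ring

theorem psiFact_nonneg_of_mem_kiteCone {v : Fin 3 → ℝ} (hv : v ∈ kiteCone) (i : Fin 4) :
    0 ≤ PsiFact v i := by
  obtain ⟨a, b, c, d, ha, hb, hc, hd, rfl⟩ := hv
  rw [psiFact_kite_combination]
  fin_cases i <;> simp <;> positivity

theorem phiFact_mem_squareCone {w : Fin 4 → ℝ} (hw : ∀ i, 0 ≤ w i) :
    PhiFact w ∈ squareCone := by
  have := hw 0; have := hw 1; have := hw 2; have := hw 3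
  simp only [squareCone, Set.mem_ofPred_eq, phiFact_eq, Matrix.cons_val, abs_le]
  refine ⟨⟨?_, ?_⟩, ?_, ?_⟩ <;> linarith

theorem exists_nonneg_phiFact_eq {v : Fin 3 → ℝ} (hv : v ∈ squareCone) :
    ∃ w : Fin 4 → ℝ, (∀ i, 0 ≤ w i) ∧ PhiFact w = v := by
  obtain ⟨⟨hx₁, hx₂⟩, hy₁, hy₂⟩ : (-v 2 ≤ v 0 ∧ v 0 ≤ v 2) ∧ -v 2 ≤ v 1 ∧ v 1 ≤ v 2 :=
    ⟨abs_le.mp hv.1, abs_le.mp hv.2⟩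
  set s := max (v 0 + v 1) 0
  have hs₀ : 0 ≤ s := le_max_right _ _
  have hs₁ : v 0 + v 1 ≤ s := le_max_left _ _
  have hs₂ : s ≤ v 2 + v 0 := max_le (by linarith) (by linarith)
  have hs₃ : s ≤ v 2 + v 1 := max_le (by linarith) (by linarith)
  refine ⟨![s, v 2 + v 0 - s, v 2 + v 1 - s, s - v 0 - v 1], fun i => ?_, ?_⟩
  · fin_cases i <;> simp <;> linarith
  · rw [phiFact_eq]
    funext j
    fin_cases j <;> simp <;> ring

theorem phiFact_image_nonneg : PhiFact '' {w | ∀ i, 0 ≤ w i} = squareCone :=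
  Set.Subset.antisymm (Set.image_subset_iff.mpr fun _ hw => phiFact_mem_squareCone hw)
    fun _ hv => exists_nonneg_phiFact_eq hv

theorem full_square_factorisation :
    (∀ v : Fin 3 → ℝ, PhiFact (PsiFact v) = v) ∧
    (∀ v ∈ kiteCone, ∀ i, 0 ≤ PsiFact v i) ∧
    (PhiFact '' {w | ∀ i, 0 ≤ w i}
      = {v : Fin 3 → ℝ | |v 0| ≤ v 2 ∧ |v 1| ≤ v 2}) :=
  ⟨phiFact_psiFact, fun _ hv => psiFact_nonneg_of_mem_kiteCone hv, phiFact_image_nonneg⟩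

end
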